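/- Let A be a residuated lattice with reticulation (L, λ). Then A is co-Stone if and only if L is co-Stone, i.e., every co-annihilator x^⊤ of a single element is a principal filter generated by a complemented element (in A, respectively in L). -/
import Mathlib


/-- A (commutative, integral) residuated lattice: a bounded lattice whose top is the
monoid unit `1`, with a commutative monoid operation `*` (⊙) and residuum `himp`
satisfying the law of residuation. -/
class ResiduatedLattice (α : Type*) extends Lattice α, CommMonoid α, OrderBot α where
  himp : α → α → α
  le_one : ∀ a : α, a ≤ 1
  le_himp_iff : ∀ a b c : α, a ≤ himp b c ↔ a * b ≤ c

namespace ResiduatedLattice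

variable {α : Type*} [ResiduatedLattice α]

/-- A filter of a residuated lattice: nonempty, closed under ⊙, upward closed. -/
def IsRLFilter (F : Set α) : Prop :=
  F.Nonempty ∧ (∀ a ∈ F, ∀ b ∈ F, a * b ∈ F) ∧ ∀ a ∈ F, ∀ b : α, a ≤ b → b ∈ F

/-- The principal filter generated by `a`: the smallest filter containing `a`. -/
def princ (a : α) : Set α := ⋂₀ {F : Set α | IsRLFilter F ∧ a ∈ F}

/-- The co-annihilator of a set. -/
def coann (X : Set α) : Set α := {a : α | ∀ x ∈ X, a ⊔ x = 1}

/-- An element is complemented (belongs to the Boolean center). -/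
def IsCompl' (a : α) : Prop := ∃ b : α, a ⊔ b = 1 ∧ a ⊓ b = ⊥

end ResiduatedLattice

open ResiduatedLattice

section Reticulation

variable {α : Type*} [ResiduatedLattice α] {L : Type*} [DistribLattice L] [BoundedOrder L]

/-- Co-annihilator in a bounded (distributive) lattice. -/
def coannL (Y : Set L) : Set L := {x : L | ∀ y ∈ Y, x ⊔ y = ⊤}

/-- Complemented element of the bounded lattice `L`. -/
def IsComplL (f : L) : Prop := ∃ g : L, f ⊔ g = ⊤ ∧ f ⊓ g = ⊥

section Aux

variable {α : Type*} [ResiduatedLattice α]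

private lemma RL.mul_le_mul_right'' {b c : α} (h : b ≤ c) (a : α) : b * a ≤ c * a := by
  have hc : c ≤ ResiduatedLattice.himp a (c * a) :=
    (ResiduatedLattice.le_himp_iff c a (c * a)).2 le_rfl
  exact (ResiduatedLattice.le_himp_iff b a (c * a)).1 (h.trans hc)

private lemma RL.mul_le_mul' {a b c d : α} (h1 : a ≤ b) (h2 : c ≤ d) : a * c ≤ b * d := by
  calc a * c ≤ b * c := RL.mul_le_mul_right'' h1 c
    _ = c * b := mul_comm _ _
    _ ≤ d * b := RL.mul_le_mul_right'' h2 b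
    _ = b * d := mul_comm _ _

private lemma RL.mul_le_left (a b : α) : a * b ≤ a := by
  have := RL.mul_le_mul' (le_refl a) (ResiduatedLattice.le_one b)
  simpa using this

private lemma RL.mul_le_right (a b : α) : a * b ≤ b := by
  have := RL.mul_le_mul' (ResiduatedLattice.le_one a) (le_refl b)
  simpa using this

private lemma RL.mul_le_inf (a b : α) : a * b ≤ a ⊓ b :=
  le_inf (RL.mul_le_left a b) (RL.mul_le_right a b)

private lemma RL.mul_sup (a b c : α) : a * (b ⊔ c) = a * b ⊔ a * c := by
  apply le_antisymm
  · rw [mul_comm, ← ResiduatedLattice.le_himp_iff]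
    apply sup_le
    · rw [ResiduatedLattice.le_himp_iff, mul_comm]; exact le_sup_left
    · rw [ResiduatedLattice.le_himp_iff, mul_comm]; exact le_sup_right
  · exact sup_le (RL.mul_le_mul' le_rfl le_sup_left) (RL.mul_le_mul' le_rfl le_sup_right)

private lemma RL.pow_le_pow {a : α} {i j : ℕ} (h : i ≤ j) : a ^ j ≤ a ^ i := by
  obtain ⟨k, rfl⟩ := Nat.exists_eq_add_of_le h
  rw [pow_add]
  calc a ^ i * a ^ k ≤ a ^ i * 1 := RL.mul_le_mul' le_rfl (ResiduatedLattice.le_one _)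
    _ = a ^ i := mul_one _

private lemma RL.mem_princ_iff (e b : α) : b ∈ princ e ↔ ∃ n : ℕ, 0 < n ∧ e ^ n ≤ b := by
  constructor
  · intro hb
    refine hb {c | ∃ n : ℕ, 0 < n ∧ e ^ n ≤ c} ⟨⟨⟨e, 1, one_pos, by simp⟩, ?_, ?_⟩, 1, one_pos, by simp⟩
    · rintro x ⟨n, hn, hxn⟩ y ⟨m, hm, hym⟩
      exact ⟨n + m, by omega, by rw [pow_add]; exact RL.mul_le_mul' hxn hym⟩
    · rintro x ⟨n, hn, hxn⟩ y hxy
      exact ⟨n, hn, hxn.trans hxy⟩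
  · rintro ⟨n, hn, hnb⟩ F ⟨⟨_, hFmul, hFup⟩, heF⟩
    have hpow : ∀ k : ℕ, e ^ (k + 1) ∈ F := by
      intro k
      induction k with
      | zero => simpa using heF
      | succ k ih => rw [pow_succ]; exact hFmul _ ih _ heF
    obtain ⟨m, rfl⟩ : ∃ m, n = m + 1 := ⟨n - 1, by omega⟩
    exact hFup _ (hpow m) _ hnb

private lemma RL.sup_pow_left {a b : α} (h : a ⊔ b = 1) : ∀ n : ℕ, a ^ n ⊔ b = 1 := by
  intro n
  induction n with
  | zero => simp [sup_eq_left.2 (ResiduatedLattice.le_one b)]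
  | succ n ih =>
    apply le_antisymm (ResiduatedLattice.le_one _)
    calc (1 : α) = 1 * 1 := (one_mul 1).symm
      _ = (a ⊔ b) * (a ^ n ⊔ b) := by rw [h, ih]
      _ = (a ⊔ b) * a ^ n ⊔ (a ⊔ b) * b := RL.mul_sup _ _ _
      _ = (a * a ^ n ⊔ b * a ^ n) ⊔ (a * b ⊔ b * b) := by
          rw [mul_comm (a ⊔ b) (a ^ n), RL.mul_sup, mul_comm (a ⊔ b) b, RL.mul_sup,
            mul_comm (a ^ n) a, mul_comm (a ^ n) b, mul_comm b a]
      _ ≤ a ^ (n + 1) ⊔ b := by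
          apply sup_le (sup_le _ _) (sup_le _ _)
          · rw [← pow_succ']; exact le_sup_left
          · exact (RL.mul_le_left b _).trans le_sup_right
          · exact (RL.mul_le_right a b).trans le_sup_right
          · exact (RL.mul_le_left b b).trans le_sup_right

private lemma RL.sup_pow {a b : α} (h : a ⊔ b = 1) (n : ℕ) : a ^ n ⊔ b ^ n = 1 := by
  have h1 : b ⊔ a ^ n = 1 := by rw [sup_comm]; exact RL.sup_pow_left h n
  rw [sup_comm]; exact RL.sup_pow_left h1 n

end Aux

theorem reticulation_coStone_iff (l : α → L)
    (hsurj : Function.Surjective l)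
    (hmul : ∀ a b : α, l (a * b) = l a ⊓ l b)
    (hsup : ∀ a b : α, l (a ⊔ b) = l a ⊔ l b)
    (hbot : l ⊥ = ⊥) (hone : l 1 = ⊤)
    (hord : ∀ a b : α, l a ≤ l b ↔ ∃ n : ℕ, 0 < n ∧ a ^ n ≤ b) :
    (∀ a : α, ∃ e : α, IsCompl' e ∧ coann {a} = princ e) ↔
    (∀ x : L, ∃ f : L, IsComplL f ∧ coannL {x} = Set.Ici f) := by
  have lmono : ∀ {a b : α}, a ≤ b → l a ≤ l b := by
    intro a b h
    exact (hord a b).2 ⟨1, one_pos, by simpa⟩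
  have ltop : ∀ {t : α}, l t = ⊤ → t = 1 := by
    intro t ht
    have h1 : l 1 ≤ l t := by rw [hone, ht]
    obtain ⟨n, _, hn⟩ := (hord 1 t).1 h1
    exact le_antisymm (ResiduatedLattice.le_one t) (by simpa using hn)
  have linf : ∀ a b : α, l (a ⊓ b) = l a ⊓ l b := by
    intro a b
    refine le_antisymm (le_inf (lmono inf_le_left) (lmono inf_le_right)) ?_
    rw [← hmul]; exact lmono (RL.mul_le_inf a b)
  constructor
  · intro H x
    obtain ⟨a, rfl⟩ := hsurj x
    obtain ⟨e, ⟨b, heb1, hebbot⟩, hco⟩ := H a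
    refine ⟨l e, ⟨l b, ?_, ?_⟩, ?_⟩
    · rw [← hsup, heb1, hone]
    · rw [← linf, hebbot, hbot]
    · ext z
      obtain ⟨c, rfl⟩ := hsurj z
      simp only [coannL, Set.mem_setOf_eq, Set.mem_singleton_iff, forall_eq, Set.mem_Ici]
      constructor
      · intro hz
        have hca : c ⊔ a = 1 := ltop (by rw [hsup]; exact hz)
        have hc : c ∈ coann {a} := by
          intro y hy; rw [Set.mem_singleton_iff] at hy; rw [hy]; exact hca
        rw [hco] at hc
        obtain ⟨n, hn, hen⟩ := (RL.mem_princ_iff e c).1 hc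
        exact (hord e c).2 ⟨n, hn, hen⟩
      · intro hz
        obtain ⟨n, hn, hen⟩ := (hord e c).1 hz
        have hc : c ∈ coann {a} := by
          rw [hco]; exact (RL.mem_princ_iff e c).2 ⟨n, hn, hen⟩
        have hca := hc a rfl
        rw [← hsup, hca, hone]
  · intro H a
    obtain ⟨f, ⟨g, hfg1, hfgbot⟩, hco⟩ := H (l a)
    obtain ⟨e0, rfl⟩ := hsurj f
    obtain ⟨b0, rfl⟩ := hsurj g
    have h1 : e0 ⊔ b0 = 1 := ltop (by rw [hsup, hfg1])
    have hb2 : l (e0 * b0) ≤ l ⊥ := by rw [hmul, hfgbot, hbot]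
    obtain ⟨n, hn, hbb⟩ := (hord _ _).1 hb2
    have hprod : (e0 * b0) ^ n = ⊥ := le_antisymm hbb bot_le
    set e := e0 ^ n with he
    set b := b0 ^ n with hb
    have heb1 : e ⊔ b = 1 := RL.sup_pow h1 n
    have hebmul : e * b = ⊥ := by rw [he, hb, ← mul_pow, hprod]
    have hebbot : e ⊓ b = ⊥ := by
      apply le_antisymm _ bot_le
      calc e ⊓ b = (e ⊓ b) * 1 := (mul_one _).symm
        _ = (e ⊓ b) * (e ⊔ b) := by rw [heb1]
        _ = (e ⊓ b) * e ⊔ (e ⊓ b) * b := RL.mul_sup _ _ _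
        _ ≤ b * e ⊔ e * b := sup_le ((RL.mul_le_mul' inf_le_right le_rfl).trans le_sup_left)
              ((RL.mul_le_mul' inf_le_left le_rfl).trans le_sup_right)
        _ = ⊥ := by rw [mul_comm b e, hebmul, sup_idem]
    refine ⟨e, ⟨b, heb1, hebbot⟩, ?_⟩
    ext c
    rw [RL.mem_princ_iff]
    simp only [coann, Set.mem_setOf_eq, Set.mem_singleton_iff, forall_eq]
    constructor
    · intro hc
      have hmem : l c ∈ coannL {l a} := by
        intro y hy; rw [Set.mem_singleton_iff] at hy; rw [hy, ← hsup, hc, hone]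
      rw [hco, Set.mem_Ici] at hmem
      obtain ⟨m, hm, hem⟩ := (hord e0 c).1 hmem
      refine ⟨m, hm, ?_⟩
      calc e ^ m = e0 ^ (n * m) := by rw [he, ← pow_mul]
        _ ≤ e0 ^ m := RL.pow_le_pow (Nat.le_mul_of_pos_left m hn)
        _ ≤ c := hem
    · rintro ⟨m, hm, hem⟩
      have hle : l e0 ≤ l c :=
        (hord e0 c).2 ⟨n * m, by positivity, by rw [pow_mul]; exact hem⟩
      have hmem : l c ∈ coannL {l a} := by rw [hco, Set.mem_Ici]; exact hle
      have hca := hmem (l a) rfl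
      exact ltop (by rw [hsup, hca])

end Reticulation
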